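/- arXiv:2504.11841 — 2 statements merged into one kernel-verified Lean document; each statement's English description precedes it below -/
import Mathlib

section
/- Let 0 → K → P → M → 0 be a short exact sequence of finitely generated kC_p-modules with P a permutation module, such that the surjection P → M does not restrict to an isomorphism from a direct summand of P onto a direct summand of M, and the injection K → P does not restrict to an isomorphism from a direct summand of K onto a direct summand of P. Then for every invariant c of M there is an invariant c' of K with c' ∈ {p-c, p-c+1}; in particular size(K) ≥ size(M) - 1. -/
open Polynomial

noncomputable section

/-- `Mmod k i` is the `k[T]`-module `M_i = k[T]/(T^i)`. -/
abbrev Mmod (k : Type) [Field k] (i : ℕ) : Type :=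
  Polynomial k ⧸ Ideal.span {(X : Polynomial k) ^ i}

/-- A permutation `kC_p`-module: a direct sum of copies of `kC_p = k[T]/T^p`
and the trivial module `k = k[T]/T`. -/
def IsPermMod (k : Type) [Field k] (p : ℕ) (M : Type) [AddCommGroup M]
    [Module (Polynomial k) M] : Prop :=
  ∃ r s : ℕ,
    Nonempty (M ≃ₗ[Polynomial k] ((Fin r → Mmod k p) × (Fin s → Mmod k 1)))

/-- `m` has depth `i`: `m ∈ T^i M` but `m ∉ T^{i+1} M`. -/
def HasDepth (k : Type) [Field k] {M : Type} [AddCommGroup M] [Module (Polynomial k) M]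
    (i : ℕ) (m : M) : Prop :=
  (∃ y : M, m = (X : Polynomial k) ^ i • y) ∧ ¬ ∃ y : M, m = (X : Polynomial k) ^ (i + 1) • y

/-- `α` is the nilpotency index of `m` with respect to `T`. -/
def IsIndex (k : Type) [Field k] {M : Type} [AddCommGroup M] [Module (Polynomial k) M]
    (α : ℕ) (m : M) : Prop :=
  (X : Polynomial k) ^ α • m = 0 ∧ ∀ β < α, (X : Polynomial k) ^ β • m ≠ 0

/-- `M` admits a resolution `0 → P_s → ⋯ → P_0 → M → 0` by permutation `kC_p`-modules. -/
def HasPermRes (k : Type) [Field k] (p : ℕ) :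
    (s : ℕ) → (M : Type) → [AddCommGroup M] → [Module (Polynomial k) M] → Prop
  | 0, M, _, _ => IsPermMod k p M
  | (s + 1), M, _, _ =>
      ∃ (P : Type) (_ : AddCommGroup P) (_ : Module (Polynomial k) P)
        (f : P →ₗ[Polynomial k] M), IsPermMod k p P ∧ Function.Surjective f ∧
          HasPermRes k p s (LinearMap.ker f)

/-- The `p`-permutation dimension of `M`: minimal length of a permutation resolution. -/
def ppdim (k : Type) [Field k] (p : ℕ) (M : Type) [AddCommGroup M]
    [Module (Polynomial k) M] : ℕ :=
  sInf {s | HasPermRes k p s M}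

/-- The `p`-distance function: `f 1 = f p = 0` and
`f x = min (f (p-x)) (f (p-x+1)) + 1` for `2 ≤ x ≤ p-1`. -/
def IsSizeFun (p : ℕ) (f : ℕ → ℕ) : Prop :=
  f 1 = 0 ∧ f p = 0 ∧ ∀ x, 2 ≤ x → x ≤ p - 1 → f x = min (f (p - x)) (f (p - x + 1)) + 1

/-- `f : A → B` restricts to an isomorphism from a (nonzero) direct summand of `A`
onto a direct summand of `B`. -/
def RestrictsToSummandIso (k : Type) [Field k] {A B : Type}
    [AddCommGroup A] [Module (Polynomial k) A] [AddCommGroup B] [Module (Polynomial k) B]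
    (f : A →ₗ[Polynomial k] B) : Prop :=
  ∃ (A₁ A₂ : Submodule (Polynomial k) A) (B₁ B₂ : Submodule (Polynomial k) B),
    IsCompl A₁ A₂ ∧ IsCompl B₁ B₂ ∧ A₁ ≠ ⊥ ∧
      Submodule.map f A₁ = B₁ ∧ Disjoint A₁ (LinearMap.ker f)


/-!
Let `y` generate a summand `M_c` of `M` and let `z ∈ P` lift it. An element killed by `t` whose
coordinate in some `k[T]/(t)` is a unit spans a direct summand. So for `c = p` the summand of `P`
spanned by `z`, and for `c = 1` with `T^{p-1} z = 0` the one spanned by the `M_1`-part of `z`,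
maps isomorphically onto a summand of `M`; for `2 ≤ c < p`, `T^{p-1} z = 0` would give
`T z ∈ T^2 P` and hence `T^{c-1} y ∈ T^c M`, which is false. So `T^{p-1} z ≠ 0`.

Write `T^c z = g n`, so that `T^{p-c} n = 0` and `g (T^{p-c-1} n) = T^{p-1} z ≠ 0`. If no
invariant of `K` lay in `{p-c, p-c+1}`, this socle element would be divisible by `T^{p-c+1}` in
`K`. Pulling this back through `P`, where `T^j`-torsion becomes divisible by `T^{p-j+1}` after
multiplying by `T`, again gives `T^{c-1} y ∈ T^c M` (for `c = 1`, directly `T^{p-1} z = 0`).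
-/

section QuotientByElement

variable {R N : Type*} [CommRing R] [AddCommGroup N] [Module R N] {t : R}

lemma smul_eq_zero_of_smul_isUnit_eq_zero {u : R ⧸ Ideal.span {t}} (hu : IsUnit u) {a : R}
    (h : a • u = 0) {x : N} (ht : t • x = 0) : a • x = 0 := by
  rw [Algebra.smul_def, Ideal.Quotient.algebraMap_eq, hu.mul_left_eq_zero,
    Ideal.Quotient.eq_zero_iff_mem, Ideal.mem_span_singleton'] at h
  obtain ⟨b, rfl⟩ := h
  rw [mul_smul, ht, smul_zero]

lemma isCompl_span_singleton_ker_of_isUnit (χ : N →ₗ[R] R ⧸ Ideal.span {t}) {x : N}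
    (ht : t • x = 0) (hx : IsUnit (χ x)) : IsCompl (R ∙ x) (LinearMap.ker χ) := by
  constructor
  · rw [Submodule.disjoint_def]
    rintro _ hv hker
    obtain ⟨a, rfl⟩ := Submodule.mem_span_singleton.mp hv
    rw [LinearMap.mem_ker, map_smul] at hker
    exact smul_eq_zero_of_smul_isUnit_eq_zero hx hker ht
  · rw [Submodule.codisjoint_iff_exists_add_eq]
    intro q
    obtain ⟨u, hu⟩ := hx
    obtain ⟨a, ha⟩ := Ideal.Quotient.mk_surjective (χ q * u.inv)
    refine ⟨a • x, q - a • x, Submodule.smul_mem _ _ (Submodule.mem_span_singleton_self x),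
      ?_, add_sub_cancel _ _⟩
    rw [LinearMap.mem_ker, map_sub, map_smul, Algebra.smul_def, Ideal.Quotient.algebraMap_eq, ha,
      ← hu, mul_assoc, u.inv_val, mul_one, sub_self]

end QuotientByElement

section SummandIso

variable {k : Type} [Field k] {A B A' B' : Type} [AddCommGroup A] [Module k[X] A]
  [AddCommGroup B] [Module k[X] B] [AddCommGroup A'] [Module k[X] A']
  [AddCommGroup B'] [Module k[X] B']

theorem restrictsToSummandIso_of_isUnit (f : A →ₗ[k[X]] B) {t t' : k[X]}
    (χ : A →ₗ[k[X]] k[X] ⧸ Ideal.span {t}) (χ' : B →ₗ[k[X]] k[X] ⧸ Ideal.span {t'})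
    {x : A} (hx : x ≠ 0) (ht : t • x = 0) (ht' : t' • x = 0)
    (hχ : IsUnit (χ x)) (hχ' : IsUnit (χ' (f x))) : RestrictsToSummandIso k f := by
  refine ⟨_, _, _, _, isCompl_span_singleton_ker_of_isUnit χ ht hχ,
    isCompl_span_singleton_ker_of_isUnit χ' (by rw [← map_smul, ht', map_zero]) hχ',
    by simpa using hx, by rw [Submodule.map_span, Set.image_singleton], ?_⟩
  rw [Submodule.disjoint_def]
  rintro _ hv hker
  obtain ⟨a, rfl⟩ := Submodule.mem_span_singleton.mp hv
  rw [LinearMap.mem_ker, map_smul] at hker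
  exact smul_eq_zero_of_smul_isUnit_eq_zero hχ' (by rw [← map_smul, hker, map_zero]) ht'

theorem RestrictsToSummandIso.of_equiv_comp_comp_equiv {f : A →ₗ[k[X]] B}
    (eA : A ≃ₗ[k[X]] A') (eB : B ≃ₗ[k[X]] B')
    (h : RestrictsToSummandIso k (eB.toLinearMap ∘ₗ f ∘ₗ eA.symm.toLinearMap)) :
    RestrictsToSummandIso k f := by
  obtain ⟨A₁, A₂, B₁, B₂, hA, hB, hne, rfl, hdisj⟩ := h
  let oA := Submodule.orderIsoMapComap eA.symm
  let oB := Submodule.orderIsoMapComap eB.symm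
  refine ⟨oA A₁, oA A₂, _, oB B₂, hA.map oA, hB.map oB, by simpa using hne, ?_, ?_⟩
  · simp only [oA, oB, Submodule.orderIsoMapComap_apply, ← Submodule.map_comp]
    congr 1
    ext
    simp
  · have hker : oA (LinearMap.ker (eB.toLinearMap ∘ₗ f ∘ₗ eA.symm.toLinearMap)) =
        LinearMap.ker f := by
      rw [Submodule.orderIsoMapComap_apply, LinearEquiv.ker_comp, LinearMap.ker_comp,
        Submodule.map_comap_eq_of_surjective eA.symm.surjective]
    rw [← hker]
    exact hdisj.map oA

end SummandIso

namespace Mmod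

variable {k : Type} [Field k] {c j : ℕ}

lemma pow_smul_eq_zero_of_le (h : c ≤ j) (ξ : Mmod k c) : (X : k[X]) ^ j • ξ = 0 := by
  obtain ⟨a, rfl⟩ := Submodule.Quotient.mk_surjective _ ξ
  rw [← Submodule.Quotient.mk_smul, Submodule.Quotient.mk_eq_zero, smul_eq_mul,
    Ideal.mem_span_singleton]
  exact (pow_dvd_pow X h).mul_right a

lemma X_smul_eq_zero (ξ : Mmod k 1) : (X : k[X]) • ξ = 0 := by
  simpa only [pow_one] using pow_smul_eq_zero_of_le le_rfl ξ

lemma exists_eq_pow_smul_of_pow_smul_eq_zero (hj : j ≤ c) {ξ : Mmod k c}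
    (h : (X : k[X]) ^ j • ξ = 0) : ∃ η : Mmod k c, ξ = (X : k[X]) ^ (c - j) • η := by
  obtain ⟨a, rfl⟩ := Submodule.Quotient.mk_surjective _ ξ
  rw [← Submodule.Quotient.mk_smul, Submodule.Quotient.mk_eq_zero, smul_eq_mul,
    Ideal.mem_span_singleton, ← Nat.add_sub_cancel' hj, pow_add,
    mul_dvd_mul_iff_left (pow_ne_zero j X_ne_zero)] at h
  obtain ⟨b, rfl⟩ := h
  exact ⟨Submodule.Quotient.mk b, by rw [← Submodule.Quotient.mk_smul, smul_eq_mul]⟩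

lemma pow_smul_one_ne_zero (h : j < c) : (X : k[X]) ^ j • (1 : Mmod k c) ≠ 0 := by
  rw [show (1 : Mmod k c) = Submodule.Quotient.mk 1 from rfl, ← Submodule.Quotient.mk_smul, Ne,
    Submodule.Quotient.mk_eq_zero, smul_eq_mul, mul_one, Ideal.mem_span_singleton,
    pow_dvd_pow_iff X_ne_zero not_isUnit_X]
  exact h.not_ge

/-- `T` is nilpotent on `M_c`, so anything outside `T • M_c` is a unit. -/
lemma isUnit_of_forall_ne_X_smul {ξ : Mmod k c} (h : ∀ η : Mmod k c, ξ ≠ (X : k[X]) • η) :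
    IsUnit ξ := by
  obtain ⟨a, rfl⟩ := Submodule.Quotient.mk_surjective _ ξ
  have ha : a.coeff 0 ≠ 0 := by
    intro h0
    obtain ⟨b, rfl⟩ := X_dvd_iff.mpr h0
    exact h (Submodule.Quotient.mk b) (by rw [← Submodule.Quotient.mk_smul, smul_eq_mul])
  rw [Ideal.Quotient.mk_eq_mk, ← X_mul_divX_add a, map_add, map_mul]
  refine IsNilpotent.isUnit_add_right_of_commute ?_ ?_ (Commute.all _ _)
  · refine (Commute.all _ _).isNilpotent_mul_right ⟨c, ?_⟩
    rw [← map_pow, Ideal.Quotient.eq_zero_iff_mem]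
    exact Ideal.mem_span_singleton_self _
  · exact (isUnit_C.mpr (isUnit_iff_ne_zero.mpr ha)).map _

end Mmod

section Pi

variable {k : Type} [Field k] {ι : Type} {c : ι → ℕ}

lemma exists_isUnit_apply_of_forall_ne_X_smul {τ : (i : ι) → Mmod k (c i)}
    (h : ∀ η : (i : ι) → Mmod k (c i), τ ≠ (X : k[X]) • η) : ∃ i, IsUnit (τ i) := by
  by_contra! hτ
  have hdiv : ∀ i, ∃ η : Mmod k (c i), τ i = (X : k[X]) • η := fun i => by
    by_contra! hi
    exact hτ i (Mmod.isUnit_of_forall_ne_X_smul hi)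
  choose η hη using hdiv
  exact h η (funext hη)

lemma exists_lt_le_add_two_or_pow_smul_eq {a : ℕ} {ν : (i : ι) → Mmod k (c i)}
    (hν : (X : k[X]) ^ (a + 1) • ν = 0) :
    (∃ i, a < c i ∧ c i ≤ a + 2) ∨ ∃ ν', (X : k[X]) ^ a • ν = (X : k[X]) ^ (a + 2) • ν' := by
  refine or_iff_not_imp_left.mpr fun hsmall => ?_
  push Not at hsmall
  have hdiv : ∀ i, ∃ η : Mmod k (c i), (X : k[X]) ^ a • ν i = (X : k[X]) ^ (a + 2) • η := by
    intro i
    rcases le_or_gt (c i) a with hle | hlt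
    · exact ⟨0, by rw [Mmod.pow_smul_eq_zero_of_le hle, smul_zero]⟩
    · have h3 := hsmall i hlt
      obtain ⟨η, hη⟩ :=
        Mmod.exists_eq_pow_smul_of_pow_smul_eq_zero (j := a + 1) (by omega) (congrFun hν i)
      refine ⟨(X : k[X]) ^ (c i - (a + 3)) • η, ?_⟩
      rw [hη, smul_smul, smul_smul, ← pow_add, ← pow_add]
      congr 2
      omega
  choose ν' hν' using hdiv
  exact ⟨ν', funext hν'⟩

variable [DecidableEq ι]

lemma pow_smul_single_one_eq_zero (i : ι) :
    (X : k[X]) ^ c i • (Pi.single i 1 : (i : ι) → Mmod k (c i)) = 0 := by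
  rw [← Pi.single_smul (f := fun i => Mmod k (c i)), Mmod.pow_smul_eq_zero_of_le le_rfl,
    Pi.single_zero]

lemma pow_smul_single_one_ne {i : ι} {j : ℕ} (hj : j + 1 = c i) (m : (i : ι) → Mmod k (c i)) :
    (X : k[X]) ^ j • (Pi.single i 1 : (i : ι) → Mmod k (c i)) ≠ (X : k[X]) ^ (j + 1) • m := by
  intro h
  have hi := congrFun h i
  rw [Pi.smul_apply, Pi.single_eq_same, Pi.smul_apply, Mmod.pow_smul_eq_zero_of_le hj.ge] at hi
  exact Mmod.pow_smul_one_ne_zero (by omega) hi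

end Pi

abbrev PermModel (k : Type) [Field k] (p : ℕ) (α β : Type) : Type :=
  (α → Mmod k p) × (β → Mmod k 1)

namespace PermModel

variable {k : Type} [Field k] {p : ℕ} {α β : Type}

lemma X_smul_snd (w : β → Mmod k 1) : (X : k[X]) • ((0, w) : PermModel k p α β) = 0 :=
  Prod.ext (smul_zero _) (funext fun b => Mmod.X_smul_eq_zero (w b))

lemma pow_smul_eq_zero (hp : 1 ≤ p) (z : PermModel k p α β) : (X : k[X]) ^ p • z = 0 :=
  Prod.ext (funext fun _ => Mmod.pow_smul_eq_zero_of_le le_rfl _)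
    (funext fun _ => Mmod.pow_smul_eq_zero_of_le hp _)

lemma exists_X_smul_eq_pow_smul {j : ℕ} (hj : j ≤ p) {z : PermModel k p α β}
    (h : (X : k[X]) ^ j • z = 0) : ∃ u, (X : k[X]) • z = (X : k[X]) ^ (p - j + 1) • u := by
  have hdiv := fun a =>
    Mmod.exists_eq_pow_smul_of_pow_smul_eq_zero hj (congrFun (congrArg Prod.fst h) a)
  choose η hη using hdiv
  refine ⟨(η, 0), Prod.ext (funext fun a => ?_) ?_⟩
  · change (X : k[X]) • z.1 a = (X : k[X]) ^ (p - j + 1) • η a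
    rw [hη a, smul_smul, ← pow_succ']
  · change (X : k[X]) • z.2 = (X : k[X]) ^ (p - j + 1) • (0 : β → Mmod k 1)
    rw [smul_zero]
    exact funext fun _ => Mmod.X_smul_eq_zero _

lemma exists_isUnit_fst (hp : 2 ≤ p) {z : PermModel k p α β}
    (h : (X : k[X]) ^ (p - 1) • z ≠ 0) : ∃ a, IsUnit (z.1 a) := by
  refine exists_isUnit_apply_of_forall_ne_X_smul fun η hη => h (Prod.ext ?_ ?_)
  · change (X : k[X]) ^ (p - 1) • z.1 = 0
    rw [hη, smul_smul, ← pow_succ, Nat.sub_add_cancel (by omega)]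
    exact funext fun _ => Mmod.pow_smul_eq_zero_of_le le_rfl _
  · exact funext fun _ => Mmod.pow_smul_eq_zero_of_le (by omega) _

lemma exists_eq_X_smul_add (hp : 1 ≤ p) {z : PermModel k p α β}
    (h : (X : k[X]) ^ (p - 1) • z = 0) :
    ∃ v, z = (X : k[X]) • (v, 0) + (0, z.2) := by
  have hdiv := fun a =>
    Mmod.exists_eq_pow_smul_of_pow_smul_eq_zero (Nat.sub_le p 1) (congrFun (congrArg Prod.fst h) a)
  choose v hv using hdiv
  refine ⟨v, Prod.ext (funext fun a => ?_) ?_⟩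
  · change z.1 a = (X : k[X]) • v a + 0
    rw [hv a, Nat.sub_sub_self hp, pow_one, add_zero]
  · change z.2 = (X : k[X]) • (0 : β → Mmod k 1) + z.2
    rw [smul_zero, zero_add]

end PermModel

section ShortExactSequence

variable {k : Type} [Field k] {p : ℕ} {α β ι κ : Type} [DecidableEq ι] {cM : ι → ℕ}
  {cK : κ → ℕ} {f : PermModel k p α β →ₗ[k[X]] ((i : ι) → Mmod k (cM i))}

theorem pow_pred_smul_ne_zero_of_apply_eq_single (hp : 2 ≤ p) (hcM : ∀ i, 1 ≤ cM i)
    (hfno : ¬ RestrictsToSummandIso k f) {i₀ : ι} {z : PermModel k p α β}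
    (hz : f z = Pi.single i₀ 1) : (X : k[X]) ^ (p - 1) • z ≠ 0 := by
  intro hz0
  rcases (hcM i₀).eq_or_lt with hc | hc
  · obtain ⟨v, hv⟩ := PermModel.exists_eq_X_smul_add (by omega) hz0
    set t : PermModel k p α β := (0, z.2)
    have hft : ∀ η, f t ≠ (X : k[X]) • η := by
      intro η hη
      apply pow_smul_single_one_ne (j := 0) (by omega) (f (v, 0) + η)
      simp only [pow_zero, one_smul, zero_add, pow_one, ← hz, hv, map_add, map_smul, hη, smul_add]
    obtain ⟨i₁, hi₁⟩ := exists_isUnit_apply_of_forall_ne_X_smul hft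
    have ht : t ≠ 0 := fun h0 => hft 0 (by rw [h0, map_zero, smul_zero])
    obtain ⟨b, hb⟩ := exists_isUnit_apply_of_forall_ne_X_smul (c := fun _ => 1) (τ := z.2)
      fun η hη => ht (Prod.ext rfl (hη.trans (funext fun _ => Mmod.X_smul_eq_zero _)))
    have hXt : (X : k[X]) • t = 0 := PermModel.X_smul_snd z.2
    refine hfno (restrictsToSummandIso_of_isUnit f (LinearMap.proj b ∘ₗ LinearMap.snd _ _ _)
      (LinearMap.proj i₁) ht (by simpa only [pow_one] using hXt) ?_ hb hi₁)
    rw [← Nat.sub_add_cancel (hcM i₁), pow_succ (X : k[X]) (cM i₁ - 1), mul_smul, hXt, smul_zero]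
  · obtain ⟨u, hu⟩ := PermModel.exists_X_smul_eq_pow_smul (j := p - 1) (by omega) hz0
    refine pow_smul_single_one_ne (i := i₀) (j := cM i₀ - 1) (by omega) (f u) ?_
    calc (X : k[X]) ^ (cM i₀ - 1) • Pi.single i₀ 1
        = (X : k[X]) ^ (cM i₀ - 2) • f ((X : k[X]) • z) := by
          rw [map_smul, hz, smul_smul, ← pow_succ]
          congr 2
          omega
      _ = (X : k[X]) ^ (cM i₀ - 1 + 1) • f u := by
          rw [hu, map_smul, smul_smul, ← pow_add]
          congr 2
          omega

theorem exists_invariant_of_not_restrictsToSummandIso (hp : 2 ≤ p)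
    (hcM : ∀ i, 1 ≤ cM i ∧ cM i ≤ p) {g : ((j : κ) → Mmod k (cK j)) →ₗ[k[X]] PermModel k p α β}
    (hg : Function.Injective g) (hf : Function.Surjective f)
    (hexact : LinearMap.range g = LinearMap.ker f) (hfno : ¬ RestrictsToSummandIso k f)
    (i₀ : ι) : ∃ j, cK j = p - cM i₀ ∨ cK j = p - cM i₀ + 1 := by
  obtain ⟨z, hz⟩ := hf (Pi.single i₀ 1)
  have hz0 := pow_pred_smul_ne_zero_of_apply_eq_single hp (fun i => (hcM i).1) hfno hz
  rcases (hcM i₀).2.eq_or_lt with hcp | hcp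
  · obtain ⟨a, ha⟩ := PermModel.exists_isUnit_fst hp hz0
    have hXz : (X : k[X]) ^ p • z = 0 := PermModel.pow_smul_eq_zero (by omega) z
    exact absurd (restrictsToSummandIso_of_isUnit f (LinearMap.proj a ∘ₗ LinearMap.fst _ _ _)
      (LinearMap.proj i₀) (fun h0 => hz0 (by rw [h0, smul_zero])) hXz (by rwa [hcp]) ha
      (by simp [hz])) hfno
  obtain ⟨n₀, hn₀⟩ : (X : k[X]) ^ cM i₀ • z ∈ LinearMap.range g := by
    rw [hexact, LinearMap.mem_ker, map_smul, hz, pow_smul_single_one_eq_zero]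
  have hn₀0 : (X : k[X]) ^ (p - cM i₀ - 1 + 1) • n₀ = 0 := hg <| by
    rw [map_smul, hn₀, smul_smul, ← pow_add, show p - cM i₀ - 1 + 1 + cM i₀ = p by omega,
      PermModel.pow_smul_eq_zero (by omega), map_zero]
  rcases exists_lt_le_add_two_or_pow_smul_eq hn₀0 with ⟨j, hj⟩ | ⟨n', hn'⟩
  · exact ⟨j, by omega⟩
  exfalso
  have hw : (X : k[X]) ^ (p - 1) • z = (X : k[X]) ^ (p - cM i₀ + 1) • g n' := by
    rw [← map_smul, show p - cM i₀ + 1 = p - cM i₀ - 1 + 2 by omega, ← hn', map_smul, hn₀,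
      smul_smul, ← pow_add]
    congr 2
    omega
  have hfw : f (g n') = 0 := by
    rw [← LinearMap.mem_ker, ← hexact]
    exact LinearMap.mem_range_self g n'
  rcases (hcM i₀).1.eq_or_lt with hc | hc
  · apply hz0
    rw [hw, ← hc, Nat.sub_add_cancel (by omega), PermModel.pow_smul_eq_zero (by omega)]
  · obtain ⟨u, hu⟩ := PermModel.exists_X_smul_eq_pow_smul (j := p - cM i₀ + 1) (by omega)
      (z := (X : k[X]) ^ (cM i₀ - 2) • z - g n') (by
        rw [smul_sub, smul_smul, ← pow_add, show p - cM i₀ + 1 + (cM i₀ - 2) = p - 1 by omega, hw,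
          sub_self])
    refine pow_smul_single_one_ne (i := i₀) (j := cM i₀ - 1) (by omega) (f u) ?_
    calc (X : k[X]) ^ (cM i₀ - 1) • Pi.single i₀ 1
        = f ((X : k[X]) • ((X : k[X]) ^ (cM i₀ - 2) • z - g n')) := by
          rw [map_smul, map_sub, hfw, sub_zero, map_smul, hz, smul_smul, ← pow_succ']
          congr 2
          omega
      _ = (X : k[X]) ^ (cM i₀ - 1 + 1) • f u := by
          rw [hu, map_smul]
          congr 2
          omega

end ShortExactSequence

lemma IsSizeFun.le_add_one {p : ℕ} {F : ℕ → ℕ} (hF : IsSizeFun p F) {x y : ℕ}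
    (hx : 1 ≤ x ∧ x ≤ p) (hy : y = p - x ∨ y = p - x + 1) : F x ≤ F y + 1 := by
  obtain ⟨h1, hp, hrec⟩ := hF
  rcases hx.1.eq_or_lt with rfl | hx1
  · omega
  rcases hx.2.eq_or_lt with rfl | hxp
  · omega
  rw [hrec x (by omega) (by omega)]
  rcases hy with rfl | rfl
  · exact Nat.add_le_add_right (min_le_left _ _) 1
  · exact Nat.add_le_add_right (min_le_right _ _) 1

theorem stmt11_general (k : Type) [Field k] (p : ℕ) (hp : p.Prime)
    (K P M : Type) [AddCommGroup K] [Module (Polynomial k) K]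
    [AddCommGroup P] [Module (Polynomial k) P]
    [AddCommGroup M] [Module (Polynomial k) M]
    (hP : IsPermMod k p P)
    (g : K →ₗ[Polynomial k] P) (f : P →ₗ[Polynomial k] M)
    (hg : Function.Injective g) (hf : Function.Surjective f)
    (hexact : LinearMap.range g = LinearMap.ker f)
    (hfno : ¬ RestrictsToSummandIso k f)
    -- invariants of `M` and `K`
    (nM : ℕ) (cM : Fin nM → ℕ) (hcM : ∀ i, 1 ≤ cM i ∧ cM i ≤ p)
    (eM : M ≃ₗ[Polynomial k] ((i : Fin nM) → Mmod k (cM i)))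
    (nK : ℕ) (cK : Fin nK → ℕ)
    (eK : K ≃ₗ[Polynomial k] ((i : Fin nK) → Mmod k (cK i))) :
    (∀ i : Fin nM, ∃ j : Fin nK, cK j = p - cM i ∨ cK j = p - cM i + 1) ∧
      ∀ f' : ℕ → ℕ, IsSizeFun p f' →
        Finset.univ.sup (fun i => f' (cM i)) ≤ Finset.univ.sup (fun j => f' (cK j)) + 1 := by
  obtain ⟨r, s, ⟨eP⟩⟩ := hP
  have hexact' : LinearMap.range (eP.toLinearMap ∘ₗ g ∘ₗ eK.symm.toLinearMap) =
      LinearMap.ker (eM.toLinearMap ∘ₗ f ∘ₗ eP.symm.toLinearMap) := by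
    simp [LinearMap.range_comp, LinearMap.ker_comp, hexact, Submodule.map_equiv_eq_comap_symm]
  have hinv : ∀ i, ∃ j, cK j = p - cM i ∨ cK j = p - cM i + 1 :=
    exists_invariant_of_not_restrictsToSummandIso hp.two_le hcM
      (eP.injective.comp (hg.comp eK.symm.injective))
      (eM.surjective.comp (hf.comp eP.symm.surjective)) hexact'
      fun h => hfno (h.of_equiv_comp_comp_equiv eP eM)
  refine ⟨hinv, fun F hF => Finset.sup_le fun i _ => ?_⟩
  obtain ⟨j, hj⟩ := hinv i
  exact (hF.le_add_one (hcM i) hj).trans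
    (Nat.add_le_add_right (Finset.le_sup (f := fun j => F (cK j)) (Finset.mem_univ j)) 1)

/-- Let `0 → K → P → M → 0` be a short exact sequence of finitely generated
`kC_p`-modules with `P` a permutation module, such that neither the surjection
`P → M` nor the injection `K → P` restricts to an isomorphism between direct
summands. Then for every invariant `c` of `M` there is an invariant `c'` of `K`
with `c' ∈ {p-c, p-c+1}`; in particular `size K ≥ size M - 1`. -/
theorem stmt11 (k : Type) [Field k] (p : ℕ) (hp : p.Prime) [CharP k p]
    (K P M : Type) [AddCommGroup K] [Module (Polynomial k) K]
    [AddCommGroup P] [Module (Polynomial k) P]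
    [AddCommGroup M] [Module (Polynomial k) M]
    [Module.Finite (Polynomial k) K] [Module.Finite (Polynomial k) P]
    [Module.Finite (Polynomial k) M]
    (hannK : ∀ m : K, (X : Polynomial k) ^ p • m = 0)
    (hannM : ∀ m : M, (X : Polynomial k) ^ p • m = 0)
    (hP : IsPermMod k p P)
    (g : K →ₗ[Polynomial k] P) (f : P →ₗ[Polynomial k] M)
    (hg : Function.Injective g) (hf : Function.Surjective f)
    (hexact : LinearMap.range g = LinearMap.ker f)
    (hfno : ¬ RestrictsToSummandIso k f) (hgno : ¬ RestrictsToSummandIso k g)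
    -- invariants of `M` and `K`
    (nM : ℕ) (cM : Fin nM → ℕ) (hcM : ∀ i, 1 ≤ cM i ∧ cM i ≤ p)
    (eM : M ≃ₗ[Polynomial k] ((i : Fin nM) → Mmod k (cM i)))
    (nK : ℕ) (cK : Fin nK → ℕ) (hcK : ∀ i, 1 ≤ cK i ∧ cK i ≤ p)
    (eK : K ≃ₗ[Polynomial k] ((i : Fin nK) → Mmod k (cK i))) :
    (∀ i : Fin nM, ∃ j : Fin nK, cK j = p - cM i ∨ cK j = p - cM i + 1) ∧
      ∀ f' : ℕ → ℕ, IsSizeFun p f' →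
        Finset.univ.sup (fun i => f' (cM i)) ≤ Finset.univ.sup (fun j => f' (cK j)) + 1 :=
  stmt11_general k p hp K P M hP g f hg hf hexact hfno nM cM hcM eM nK cK eK
end
end

section
/- For every finitely generated kC_p-module M, ppdim(M) ≤ size(M); i.e., M admits a permutation resolution of length size(M). -/
open Polynomial

noncomputable section

/-!
For `2 ≤ c ≤ p - 1` there are two short exact sequences of `k[X]`-modules with permutation
middle term,
`0 → M_{p-c} → M_p → M_c → 0` (multiplication by `X^c`, then projection) and
`0 → M_{p-c+1} → M_p ⊕ M_1 → M_c → 0` (`r ↦ (X^{c-1} r, -r)`, then `(s, t) ↦ s + X^{c-1} t`).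
Splicing in whichever of the two syzygies `M_{p-c}`, `M_{p-c+1}` has the smaller `p`-distance
gives, by induction on that distance, a permutation resolution of `M_c` of length `size c`.
Direct sums of resolutions of equal length are resolutions, and lengthening a resolution by a
zero term is harmless, so `⨁ M_{c_i}` has one of length `max size(c_i)`.
-/

theorem Function.Exact.prodMap {M₁ N₁ P₁ M₂ N₂ P₂ : Type*} [Zero P₁] [Zero P₂]
    {f₁ : M₁ → N₁} {g₁ : N₁ → P₁} {f₂ : M₂ → N₂} {g₂ : N₂ → P₂}
    (h₁ : Function.Exact f₁ g₁) (h₂ : Function.Exact f₂ g₂) :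
    Function.Exact (Prod.map f₁ f₂) (Prod.map g₁ g₂) := by
  rintro ⟨y₁, y₂⟩
  simp only [Prod.map_apply, Prod.mk_eq_zero, h₁ y₁, h₂ y₂, Set.range_prodMap, Set.mem_prod]

section PermResolutions

variable {k : Type} [Field k] {p : ℕ} {M N : Type} [AddCommGroup M] [Module k[X] M]
  [AddCommGroup N] [Module k[X] N]

theorem IsPermMod.of_equiv (h : IsPermMod k p M) (e : M ≃ₗ[k[X]] N) : IsPermMod k p N := by
  obtain ⟨r, s, ⟨g⟩⟩ := h
  exact ⟨r, s, ⟨e.symm.trans g⟩⟩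

theorem isPermMod_of_subsingleton [Subsingleton M] : IsPermMod k p M :=
  ⟨0, 0, ⟨LinearEquiv.ofSubsingleton _ _⟩⟩

theorem IsPermMod.prod (hM : IsPermMod k p M) (hN : IsPermMod k p N) :
    IsPermMod k p (M × N) := by
  obtain ⟨r, s, ⟨g⟩⟩ := hM
  obtain ⟨r', s', ⟨g'⟩⟩ := hN
  let finSumArrow (m n : ℕ) (A : Type) [AddCommGroup A] [Module k[X] A] :
      (Fin (m + n) → A) ≃ₗ[k[X]] (Fin m → A) × (Fin n → A) :=
    (LinearEquiv.funCongrLeft k[X] A finSumFinEquiv).trans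
      (LinearEquiv.sumArrowLequivProdArrow _ _ k[X] A)
  exact ⟨r + r', s + s', ⟨(g.prodCongr g').trans <|
    (LinearEquiv.prodProdProdComm _ _ _ _ _).trans <|
      (finSumArrow r r' _).symm.prodCongr (finSumArrow s s' _).symm⟩⟩

theorem isPermMod_Mmod_self : IsPermMod k p (Mmod k p) :=
  ⟨1, 0, ⟨(LinearEquiv.funUnique (Fin 1) k[X] _).symm.trans LinearEquiv.prodUnique.symm⟩⟩

theorem isPermMod_Mmod_one : IsPermMod k p (Mmod k 1) :=
  ⟨0, 1, ⟨(LinearEquiv.funUnique (Fin 1) k[X] _).symm.trans LinearEquiv.uniqueProd.symm⟩⟩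

theorem HasPermRes.of_equiv {s : ℕ} (h : HasPermRes k p s M) (e : M ≃ₗ[k[X]] N) :
    HasPermRes k p s N := by
  induction s generalizing M N with
  | zero => exact IsPermMod.of_equiv h e
  | succ s ih =>
    obtain ⟨P, _, _, g, hP, hg, hK⟩ := h
    refine ⟨P, _, _, e.toLinearMap ∘ₗ g, hP, e.surjective.comp hg, ?_⟩
    rwa [LinearEquiv.ker_comp]

theorem HasPermRes.succ_of_exact {s : ℕ} {P : Type} [AddCommGroup P] [Module k[X] P]
    (hN : HasPermRes k p s N) (hP : IsPermMod k p P) (ι : N →ₗ[k[X]] P) (g : P →ₗ[k[X]] M)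
    (hι : Function.Injective ι) (hg : Function.Surjective g) (hιg : Function.Exact ι g) :
    HasPermRes k p (s + 1) M :=
  ⟨P, _, _, g, hP, hg, hN.of_equiv <| (LinearEquiv.ofInjective ι hι).trans
    (LinearEquiv.ofEq _ _ (LinearMap.exact_iff.mp hιg).symm)⟩

theorem HasPermRes.succ {s : ℕ} (h : HasPermRes k p s M) : HasPermRes k p (s + 1) M := by
  induction s generalizing M with
  | zero =>
    exact HasPermRes.succ_of_exact (isPermMod_of_subsingleton (M := PUnit)) h 0 LinearMap.id
      (Function.injective_of_subsingleton _) Function.surjective_id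
      (LinearMap.exact_iff.mpr (by simp))
  | succ s ih =>
    obtain ⟨P, _, _, g, hP, hg, hK⟩ := h
    exact ⟨P, _, _, g, hP, hg, ih hK⟩

theorem HasPermRes.mono {s t : ℕ} (h : HasPermRes k p s M) (hst : s ≤ t) :
    HasPermRes k p t M := by
  induction hst with
  | refl => exact h
  | step _ ih => exact ih.succ

theorem IsPermMod.hasPermRes (h : IsPermMod k p M) (s : ℕ) : HasPermRes k p s M :=
  HasPermRes.mono (s := 0) h s.zero_le

theorem HasPermRes.prod {s : ℕ} (hM : HasPermRes k p s M) (hN : HasPermRes k p s N) :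
    HasPermRes k p s (M × N) := by
  induction s generalizing M N with
  | zero => exact IsPermMod.prod hM hN
  | succ s ih =>
    obtain ⟨P, _, _, g, hP, hg, hK⟩ := hM
    obtain ⟨Q, _, _, g', hQ, hg', hK'⟩ := hN
    exact (ih hK hK').succ_of_exact (hP.prod hQ) ((LinearMap.ker g).subtype.prodMap (LinearMap.ker g').subtype)
      (g.prodMap g') (Subtype.val_injective.prodMap Subtype.val_injective) (hg.prodMap hg')
      ((LinearMap.exact_subtype_ker_map g).prodMap (LinearMap.exact_subtype_ker_map g'))

theorem HasPermRes.pi {s n : ℕ} {F : Fin n → Type} [∀ i, AddCommGroup (F i)]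
    [∀ i, Module k[X] (F i)] (h : ∀ i, HasPermRes k p s (F i)) :
    HasPermRes k p s (∀ i, F i) := by
  induction n with
  | zero => exact isPermMod_of_subsingleton.hasPermRes s
  | succ n ih => exact ((h 0).prod (ih fun i => h i.succ)).of_equiv (Fin.consLinearEquiv k[X] F)

end PermResolutions

namespace Mmod

variable {k : Type} [Field k]

theorem mk_eq_zero_iff {a : ℕ} {r : k[X]} :
    (Submodule.Quotient.mk r : Mmod k a) = 0 ↔ X ^ a ∣ r := by
  rw [Submodule.Quotient.mk_eq_zero, Ideal.mem_span_singleton]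

def proj {a b : ℕ} (h : b ≤ a) : Mmod k a →ₗ[k[X]] Mmod k b :=
  Submodule.mapQ _ _ LinearMap.id <| by
    rw [Submodule.comap_id]
    exact Ideal.span_singleton_le_span_singleton.mpr (pow_dvd_pow X h)

theorem proj_surjective {a b : ℕ} (h : b ≤ a) : Function.Surjective (proj (k := k) h) := by
  rintro ⟨r⟩
  exact ⟨Submodule.Quotient.mk r, rfl⟩

def mulXPow {m a : ℕ} (b : ℕ) (h : a ≤ m + b) : Mmod k m →ₗ[k[X]] Mmod k a :=
  Submodule.mapQ _ _ (LinearMap.mulLeft k[X] (X ^ b)) fun r hr => by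
    obtain ⟨q, rfl⟩ := Ideal.mem_span_singleton.mp hr
    exact Ideal.mem_span_singleton.mpr ((pow_dvd_pow X h).trans ⟨q, by simp; ring⟩)

theorem mulXPow_mk {m a b : ℕ} (h : a ≤ m + b) (r : k[X]) :
    mulXPow b h (Submodule.Quotient.mk r) = (Submodule.Quotient.mk (X ^ b * r) : Mmod k a) :=
  rfl

theorem mulXPow_injective {m a b : ℕ} (h : a = m + b) :
    Function.Injective (mulXPow (k := k) (m := m) b h.le) := by
  refine (injective_iff_map_eq_zero _).mpr fun x hx => ?_
  induction x using Submodule.Quotient.induction_on with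
  | _ r =>
  rw [mulXPow_mk, mk_eq_zero_iff, h, pow_add, mul_comm (X ^ m),
    mul_dvd_mul_iff_left (pow_ne_zero _ X_ne_zero)] at hx
  exact mk_eq_zero_iff.mpr hx

theorem exact_mulXPow_proj {a b : ℕ} (h : b ≤ a) :
    Function.Exact (mulXPow (k := k) (m := a - b) b (by omega)) (proj h) := by
  refine LinearMap.exact_of_comp_of_mem_range ?_ fun y hy => ?_
  · ext
    exact mk_eq_zero_iff.mpr (dvd_mul_right _ _)
  · induction y using Submodule.Quotient.induction_on with
    | _ r =>
    obtain ⟨q, rfl⟩ := mk_eq_zero_iff.mp hy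
    exact ⟨Submodule.Quotient.mk q, rfl⟩

def projSocle {p c : ℕ} (h : c ≤ p) : Mmod k p × Mmod k 1 →ₗ[k[X]] Mmod k c :=
  (proj h).coprod (mulXPow (c - 1) (by omega))

def projSocleKer (p c : ℕ) : Mmod k (p - c + 1) →ₗ[k[X]] Mmod k p × Mmod k 1 :=
  (mulXPow (c - 1) (by omega)).prod (-proj (by omega))

theorem projSocle_mk {p c : ℕ} (h : c ≤ p) (s t : k[X]) :
    projSocle h (Submodule.Quotient.mk s, Submodule.Quotient.mk t) =
      (Submodule.Quotient.mk (s + X ^ (c - 1) * t) : Mmod k c) :=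
  rfl

theorem projSocleKer_mk (p c : ℕ) (r : k[X]) :
    projSocleKer p c (Submodule.Quotient.mk r) =
      ((Submodule.Quotient.mk (X ^ (c - 1) * r), Submodule.Quotient.mk (-r)) :
        Mmod k p × Mmod k 1) :=
  rfl

theorem projSocle_surjective {p c : ℕ} (h : c ≤ p) :
    Function.Surjective (projSocle (k := k) h) := by
  intro y
  obtain ⟨r, rfl⟩ := Submodule.Quotient.mk_surjective _ y
  refine ⟨(Submodule.Quotient.mk r, Submodule.Quotient.mk 0), ?_⟩
  rw [projSocle_mk, mul_zero, add_zero]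

theorem projSocleKer_injective {p c : ℕ} (h1 : 1 ≤ c) (h2 : c ≤ p) :
    Function.Injective (projSocleKer (k := k) p c) :=
  fun _ _ hxy => mulXPow_injective (by omega) (congrArg Prod.fst hxy)

theorem exact_projSocleKer_projSocle {p c : ℕ} (h1 : 1 ≤ c) (h2 : c ≤ p) :
    Function.Exact (projSocleKer (k := k) p c) (projSocle h2) := by
  refine LinearMap.exact_of_comp_of_mem_range ?_ fun y hy => ?_
  · refine LinearMap.ext fun x => ?_
    induction x using Submodule.Quotient.induction_on with
    | _ r =>
    rw [LinearMap.comp_apply, projSocleKer_mk, projSocle_mk, mul_neg, add_neg_cancel]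
    rfl
  · obtain ⟨⟨s, t⟩, rfl⟩ := Prod.map_surjective.mpr
      ⟨Submodule.Quotient.mk_surjective _, Submodule.Quotient.mk_surjective _⟩ y
    rw [Prod.map_apply, projSocle_mk, mk_eq_zero_iff] at hy
    obtain ⟨q, hq⟩ := hy
    have hXc : (X : k[X]) ^ (c - 1) * X = X ^ c := by rw [← pow_succ, Nat.sub_add_cancel h1]
    refine ⟨Submodule.Quotient.mk (X * q - t), ?_⟩
    rw [projSocleKer_mk, Prod.map_apply]
    refine Prod.ext (congrArg Submodule.Quotient.mk ?_) ((Submodule.Quotient.eq _).mpr ?_)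
    · linear_combination -hq + q * hXc
    · exact Ideal.mem_span_singleton.mpr ⟨-q, by ring⟩

end Mmod

section CyclicModules

variable {k : Type} [Field k] {p c s : ℕ}

theorem hasPermRes_succ_Mmod_of_sub (h : c ≤ p) (H : HasPermRes k p s (Mmod k (p - c))) :
    HasPermRes k p (s + 1) (Mmod k c) :=
  H.succ_of_exact isPermMod_Mmod_self _ _ (Mmod.mulXPow_injective (by omega))
    (Mmod.proj_surjective h) (Mmod.exact_mulXPow_proj h)

theorem hasPermRes_succ_Mmod_of_sub_add_one (h1 : 1 ≤ c) (h2 : c ≤ p)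
    (H : HasPermRes k p s (Mmod k (p - c + 1))) : HasPermRes k p (s + 1) (Mmod k c) :=
  H.succ_of_exact (isPermMod_Mmod_self.prod isPermMod_Mmod_one) _ _
    (Mmod.projSocleKer_injective h1 h2) (Mmod.projSocle_surjective h2)
    (Mmod.exact_projSocleKer_projSocle h1 h2)

theorem hasPermRes_Mmod {f : ℕ → ℕ} (hf : IsSizeFun p f) (hc : 1 ≤ c ∧ c ≤ p) (hs : f c ≤ s) :
    HasPermRes k p s (Mmod k c) := by
  obtain ⟨-, -, hf_rec⟩ := hf
  induction s using Nat.strong_induction_on generalizing c with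
  | _ s ih =>
  rcases (by omega : c = 1 ∨ c = p ∨ 2 ≤ c ∧ c ≤ p - 1) with rfl | rfl | ⟨hc2, hcp⟩
  · exact isPermMod_Mmod_one.hasPermRes s
  · exact isPermMod_Mmod_self.hasPermRes s
  have hfc := hf_rec c hc2 hcp
  obtain ⟨t, rfl⟩ : ∃ t, s = t + 1 := ⟨s - 1, by omega⟩
  rcases le_total (f (p - c)) (f (p - c + 1)) with hle | hle
  · exact hasPermRes_succ_Mmod_of_sub hc.2 (ih t (by omega) (by omega) (by omega))
  · exact hasPermRes_succ_Mmod_of_sub_add_one hc.1 hc.2 (ih t (by omega) (by omega) (by omega))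

end CyclicModules

theorem stmt13_general (k : Type) [Field k] (p : ℕ)
    (M : Type) [AddCommGroup M] [Module (Polynomial k) M]
    (n : ℕ) (c : Fin n → ℕ) (hc : ∀ i, 1 ≤ c i ∧ c i ≤ p)
    (e : M ≃ₗ[Polynomial k] ((i : Fin n) → Mmod k (c i)))
    (f : ℕ → ℕ) (hf : IsSizeFun p f) :
    HasPermRes k p (Finset.univ.sup (fun i => f (c i))) M ∧
      ppdim k p M ≤ Finset.univ.sup (fun i => f (c i)) := by
  have hM : HasPermRes k p (Finset.univ.sup fun i => f (c i)) M :=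
    (HasPermRes.pi fun i => hasPermRes_Mmod hf (hc i)
      (Finset.le_sup (f := fun i => f (c i)) (Finset.mem_univ i))).of_equiv e.symm
  exact ⟨hM, Nat.sInf_le hM⟩

/-- Every finitely generated `kC_p`-module `M` admits a permutation resolution of
length `size M`; hence `ppdim M ≤ size M`. Here `size M` is the maximum of the
`p`-distances of the invariants of `M`. -/
theorem stmt13 (k : Type) [Field k] (p : ℕ) (hp : p.Prime) [CharP k p]
    (M : Type) [AddCommGroup M] [Module (Polynomial k) M] [Module.Finite (Polynomial k) M]
    (hann : ∀ m : M, (X : Polynomial k) ^ p • m = 0)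
    (n : ℕ) (c : Fin n → ℕ) (hc : ∀ i, 1 ≤ c i ∧ c i ≤ p)
    (e : M ≃ₗ[Polynomial k] ((i : Fin n) → Mmod k (c i)))
    (f : ℕ → ℕ) (hf : IsSizeFun p f) :
    HasPermRes k p (Finset.univ.sup (fun i => f (c i))) M ∧
      ppdim k p M ≤ Finset.univ.sup (fun i => f (c i)) :=
  stmt13_general k p M n c hc e f hf
end
end
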